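/- Quantum Wigderson-Wigderson uncertainty principle for general conjugate exponents, commutative finite-dimensional case: if k > 0, F is a k-transform, and F* ∘ F = k • id, then for all reals p, q with 2 ≤ p < ∞ and 1/p + 1/q = 1, and any x : Fin n → ℂ, one has ‖x‖_{q,d} * ‖F x‖_{q,τ} ≥ k^(1 − 2/p) * ‖x‖_{p,d} * ‖F x‖_{p,τ}. -/

import Mathlib

open Finset

/-- Weighted `p`-norm on `Fin n → ℂ` with weight `d`. -/
noncomputable def wnorm {n : ℕ} (d : Fin n → ℝ) (p : ℝ) (x : Fin n → ℂ) : ℝ :=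
  (∑ i, d i * ‖x i‖ ^ p) ^ (1 / p)

/-- Sup (infinity) norm on `Fin n → ℂ`. -/
noncomputable def inorm {n : ℕ} (x : Fin n → ℂ) : ℝ :=
  ⨆ i, ‖x i‖

/-- `G` is the adjoint of `F` with respect to the weighted inner products with
weights `d` and `τ`. -/
def IsAdjointPair {n m : ℕ} (d : Fin n → ℝ) (τ : Fin m → ℝ)
    (F : (Fin n → ℂ) →ₗ[ℂ] (Fin m → ℂ)) (G : (Fin m → ℂ) →ₗ[ℂ] (Fin n → ℂ)) : Prop :=
  ∀ (x : Fin n → ℂ) (u : Fin m → ℂ),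
    ∑ j, (τ j : ℂ) * (starRingEnd ℂ) (F x j) * u j
      = ∑ i, (d i : ℂ) * (starRingEnd ℂ) (x i) * G u i

/-!
Write `⟨v, u⟩_τ = ∑ τⱼ vⱼ uⱼ` (`wpair`). The hypotheses make `F` a contraction `L¹ → L^∞` and,
through `F* F = k`, a map `L² → L²` of norm `√k`. Riesz–Thorin interpolation between the two gives
`|⟨F x, u⟩_τ| ≤ k^{1/p} ‖x‖_q ‖u‖_q`: apply Hadamard's three lines theorem to
`z ↦ ⟨F x_z, u_z⟩_τ` with `x_z = sgn x · |x|^z` (`phasePow`) on the strip `q/2 ≤ Re z ≤ q`. On its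
left edge `x_z` has `L²` norm `‖x‖_q^{q/2}`, on its right edge `L¹` norm `‖x‖_q^q`, and `x_1 = x`.
By duality this is the Hausdorff–Young inequality `‖F x‖_p ≤ k^{1/p} ‖x‖_q`. By adjointness the same
bound holds for `F*`, so `k ‖x‖_p = ‖F* F x‖_p ≤ k^{1/p} ‖F x‖_q`, and multiplying the two
inequalities gives the theorem.
-/

noncomputable def wpair {m : ℕ} (τ : Fin m → ℝ) (v u : Fin m → ℂ) : ℂ :=
  ∑ j, (τ j : ℂ) * v j * u j

noncomputable def phasePow (w z : ℂ) : ℂ :=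
  w / ‖w‖ * Complex.exp (z * Real.log ‖w‖)

section WeightedNorm

variable {n : ℕ} {d : Fin n → ℝ} {p : ℝ}

lemma sum_mul_norm_rpow_nonneg (hd : ∀ i, 0 ≤ d i) (p : ℝ) (x : Fin n → ℂ) :
    0 ≤ ∑ i, d i * ‖x i‖ ^ p :=
  Finset.sum_nonneg fun i _ => mul_nonneg (hd i) (by positivity)

lemma wnorm_nonneg (hd : ∀ i, 0 ≤ d i) (x : Fin n → ℂ) : 0 ≤ wnorm d p x :=
  Real.rpow_nonneg (sum_mul_norm_rpow_nonneg hd p x) _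

lemma wnorm_one (x : Fin n → ℂ) : wnorm d 1 x = ∑ i, d i * ‖x i‖ := by
  simp [wnorm]

lemma wnorm_star (x : Fin n → ℂ) : wnorm d p (star x) = wnorm d p x := by
  simp [wnorm]

lemma wnorm_smul_ofReal (hd : ∀ i, 0 ≤ d i) (hp : p ≠ 0) {r : ℝ} (hr : 0 ≤ r)
    (x : Fin n → ℂ) : wnorm d p ((r : ℂ) • x) = r * wnorm d p x := by
  have hterm : ∀ i, d i * ‖((r : ℂ) • x) i‖ ^ p = r ^ p * (d i * ‖x i‖ ^ p) := fun i => by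
    rw [Pi.smul_apply, smul_eq_mul, norm_mul, Complex.norm_of_nonneg hr,
      Real.mul_rpow hr (norm_nonneg _)]
    ring
  rw [wnorm, wnorm, Finset.sum_congr rfl fun i _ => hterm i, ← Finset.mul_sum,
    Real.mul_rpow (by positivity) (sum_mul_norm_rpow_nonneg hd p x), ← Real.rpow_mul hr,
    mul_one_div_cancel hp, Real.rpow_one]

lemma norm_le_inorm (x : Fin n → ℂ) (i : Fin n) : ‖x i‖ ≤ inorm x :=
  le_ciSup (f := fun i => ‖x i‖) (Finite.bddAbove_range _) i

end WeightedNorm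

section Pairing

variable {m : ℕ} {τ : Fin m → ℝ}

lemma wpair_comm (v u : Fin m → ℂ) : wpair τ v u = wpair τ u v :=
  Finset.sum_congr rfl fun _ _ => mul_right_comm _ _ _

lemma wpair_smul_right (c : ℂ) (v u : Fin m → ℂ) : wpair τ v (c • u) = c * wpair τ v u := by
  simp only [wpair, Finset.mul_sum, Pi.smul_apply, smul_eq_mul]
  exact Finset.sum_congr rfl fun _ _ => by ring

lemma star_wpair (v u : Fin m → ℂ) : star (wpair τ v u) = wpair τ (star v) (star u) := by
  simp [wpair, star_sum, mul_comm, mul_left_comm]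

lemma wpair_star_self (v : Fin m → ℂ) :
    wpair τ (star v) v = ((∑ j, τ j * ‖v j‖ ^ (2 : ℝ) : ℝ) : ℂ) := by
  simp only [wpair, Complex.ofReal_sum, Complex.ofReal_mul, Real.rpow_two, Pi.star_apply, mul_assoc]
  refine Finset.sum_congr rfl fun j _ => ?_
  rw [Complex.star_def, Complex.conj_mul', Complex.ofReal_pow]

lemma norm_wpair_le (hτ : ∀ j, 0 ≤ τ j) (v u : Fin m → ℂ) :
    ‖wpair τ v u‖ ≤ ∑ j, τ j * (‖v j‖ * ‖u j‖) := by
  refine (norm_sum_le _ _).trans_eq (Finset.sum_congr rfl fun j _ => ?_)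
  rw [norm_mul, norm_mul, Complex.norm_of_nonneg (hτ j), mul_assoc]

lemma norm_wpair_le_inorm_mul_wnorm_one (hτ : ∀ j, 0 ≤ τ j) (v u : Fin m → ℂ) :
    ‖wpair τ v u‖ ≤ inorm v * wnorm τ 1 u := by
  refine (norm_wpair_le hτ v u).trans ?_
  rw [wnorm_one, Finset.mul_sum]
  refine Finset.sum_le_sum fun j _ => ?_
  calc τ j * (‖v j‖ * ‖u j‖) = ‖v j‖ * (τ j * ‖u j‖) := by ring
    _ ≤ inorm v * (τ j * ‖u j‖) :=
      mul_le_mul_of_nonneg_right (norm_le_inorm v j) (mul_nonneg (hτ j) (norm_nonneg _))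

lemma norm_wpair_le_wnorm_mul_wnorm (hτ : ∀ j, 0 ≤ τ j) {p q : ℝ} (hpq : p.HolderConjugate q)
    (v u : Fin m → ℂ) : ‖wpair τ v u‖ ≤ wnorm τ p v * wnorm τ q u := by
  have hpow : ∀ r : ℝ, r ≠ 0 → ∀ (w : Fin m → ℂ) j,
      (τ j ^ r⁻¹ * ‖w j‖) ^ r = τ j * ‖w j‖ ^ r := fun r hr w j => by
    rw [Real.mul_rpow (Real.rpow_nonneg (hτ j) _) (norm_nonneg _), Real.rpow_inv_rpow (hτ j) hr]
  have hprod : ∀ j, τ j ^ p⁻¹ * ‖v j‖ * (τ j ^ q⁻¹ * ‖u j‖) = τ j * (‖v j‖ * ‖u j‖) := fun j => by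
    rw [mul_mul_mul_comm, ← Real.rpow_add' (hτ j) (hpq.inv_add_inv_eq_one ▸ one_ne_zero),
      hpq.inv_add_inv_eq_one, Real.rpow_one]
  have holder := Real.inner_le_Lp_mul_Lq_of_nonneg Finset.univ hpq
    (f := fun j => τ j ^ p⁻¹ * ‖v j‖) (g := fun j => τ j ^ q⁻¹ * ‖u j‖)
    (fun j _ => by have := hτ j; positivity) (fun j _ => by have := hτ j; positivity)
  simp only [hprod, hpow p hpq.ne_zero, hpow q hpq.symm.ne_zero] at holder
  exact (norm_wpair_le hτ v u).trans holder

end Pairing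

lemma wnorm_le_of_norm_wpair_le {m : ℕ} {τ : Fin m → ℝ} (hτ : ∀ j, 0 ≤ τ j) {p q : ℝ}
    (hpq : p.HolderConjugate q) {v : Fin m → ℂ} {C : ℝ} (hC : 0 ≤ C)
    (h : ∀ u, ‖wpair τ v u‖ ≤ C * wnorm τ q u) : wnorm τ p v ≤ C := by
  set S := ∑ j, τ j * ‖v j‖ ^ p
  have hS : 0 ≤ S := sum_mul_norm_rpow_nonneg hτ p v
  -- the extremal `u` for Hölder's inequality
  let u : Fin m → ℂ := fun j => star (v j) * (‖v j‖ ^ (p - 2) : ℝ)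
  have hvu : ∀ j, v j * u j = (‖v j‖ ^ p : ℝ) := fun j => by
    rcases eq_or_ne (v j) 0 with h0 | h0
    · simp [u, h0, Real.zero_rpow hpq.ne_zero]
    · rw [← mul_assoc, Complex.star_def, Complex.mul_conj', ← Complex.ofReal_pow,
        ← Complex.ofReal_mul, ← Real.rpow_two, ← Real.rpow_add (norm_pos_iff.2 h0), add_sub_cancel]
  have hu : ∀ j, ‖u j‖ = ‖v j‖ ^ (p - 1) := fun j => by
    rcases eq_or_ne (v j) 0 with h0 | h0
    · simp [u, h0, Real.zero_rpow hpq.sub_one_ne_zero]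
    · rw [norm_mul, norm_star, Complex.norm_of_nonneg (by positivity),
        show p - 1 = 1 + (p - 2) by ring, Real.rpow_add (norm_pos_iff.2 h0), Real.rpow_one]
  have hpair : wpair τ v u = (S : ℂ) := by
    simp only [wpair, S, Complex.ofReal_sum, Complex.ofReal_mul, mul_assoc, hvu]
  have hnorm_u : wnorm τ q u = S ^ (1 / q) := by
    simp only [wnorm, S, hu, ← Real.rpow_mul (norm_nonneg _), hpq.sub_one_mul_conj]
  have hSC : S ≤ C * S ^ (1 / q) := by
    have := h u
    rwa [hpair, hnorm_u, Complex.norm_real, Real.norm_of_nonneg hS] at this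
  change S ^ (1 / p) ≤ C
  rcases hS.eq_or_lt with h0 | hpos
  · rw [← h0, Real.zero_rpow hpq.one_div_ne_zero]; exact hC
  · refine le_of_mul_le_mul_right ?_ (Real.rpow_pos_of_pos hpos (1 / q))
    rwa [← Real.rpow_add hpos, hpq.one_div_add_one_div, div_one, Real.rpow_one]

section PhasePow

variable (w : ℂ) {z : ℂ}

lemma norm_phasePow (hz : 0 < z.re) : ‖phasePow w z‖ = ‖w‖ ^ z.re := by
  rcases eq_or_ne w 0 with rfl | hw
  · simp [phasePow, Real.zero_rpow hz.ne']
  · have hpos : 0 < ‖w‖ := norm_pos_iff.2 hw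
    rw [phasePow, norm_mul, norm_div, Complex.norm_real, Real.norm_of_nonneg hpos.le,
      div_self hpos.ne', one_mul, Complex.norm_exp, Complex.re_mul_ofReal,
      Real.rpow_def_of_pos hpos, mul_comm]

lemma phasePow_one : phasePow w 1 = w := by
  rcases eq_or_ne w 0 with rfl | hw
  · simp [phasePow]
  · rw [phasePow, one_mul, ← Complex.ofReal_exp, Real.exp_log (norm_pos_iff.2 hw),
      div_mul_cancel₀ _ (Complex.ofReal_ne_zero.2 (norm_ne_zero_iff.2 hw))]

lemma differentiable_phasePow : Differentiable ℂ (phasePow w) :=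
  (differentiable_id.mul_const _).cexp.const_mul _

lemma norm_phasePow_le (hz : 0 < z.re) {s : ℝ} (hs : z.re ≤ s) :
    ‖phasePow w z‖ ≤ max 1 ‖w‖ ^ s := by
  rw [norm_phasePow w hz]
  calc ‖w‖ ^ z.re ≤ max 1 ‖w‖ ^ z.re :=
        Real.rpow_le_rpow (norm_nonneg w) (le_max_right _ _) hz.le
    _ ≤ max 1 ‖w‖ ^ s := Real.rpow_le_rpow_of_exponent_le (le_max_left _ _) hs

end PhasePow

lemma wnorm_phasePow {n : ℕ} {d : Fin n → ℝ} (hd : ∀ i, 0 ≤ d i) (x : Fin n → ℂ) {z : ℂ}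
    (hz : 0 < z.re) {r q : ℝ} (hr : 0 < r) (hzr : z.re * r = q) :
    wnorm d r (fun i => phasePow (x i) z) = wnorm d q x ^ (q / r) := by
  have hq : q ≠ 0 := by rw [← hzr]; positivity
  simp only [wnorm, norm_phasePow _ hz, ← Real.rpow_mul (norm_nonneg _), hzr]
  rw [← Real.rpow_mul (sum_mul_norm_rpow_nonneg hd q x)]
  congr 1
  field_simp

lemma Differentiable.wpair {m : ℕ} {τ : Fin m → ℝ} {v u : ℂ → Fin m → ℂ}
    (hv : Differentiable ℂ v) (hu : Differentiable ℂ u) :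
    Differentiable ℂ fun z => wpair τ (v z) (u z) :=
  Differentiable.fun_sum fun j _ =>
    ((differentiable_pi.1 hv j).const_mul _).mul (differentiable_pi.1 hu j)

lemma interpolation_rpow_eq {p q : ℝ} (hpq : p.HolderConjugate q) {M R : ℝ} (hM : 0 ≤ M)
    (hR : 0 ≤ R) : (M * R ^ (q / 2)) ^ (2 / p) * (R ^ q) ^ (1 - 2 / p) = M ^ (2 / p) * R := by
  have hqp : q * (1 - p⁻¹) = 1 := by rw [hpq.one_sub_inv, mul_inv_cancel₀ hpq.symm.ne_zero]
  have hexp : q / 2 * (2 / p) + q * (1 - 2 / p) = 1 := by linear_combination hqp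
  rw [Real.mul_rpow hM (by positivity), ← Real.rpow_mul hR, ← Real.rpow_mul hR, mul_assoc,
    ← Real.rpow_add' hR (by rw [hexp]; exact one_ne_zero), hexp, Real.rpow_one]

open Complex.HadamardThreeLines in
theorem norm_wpair_le_rieszThorin {n m : ℕ} {d : Fin n → ℝ} {τ : Fin m → ℝ}
    (hd : ∀ i, 0 ≤ d i) (hτ : ∀ j, 0 ≤ τ j) (T : (Fin n → ℂ) →ₗ[ℂ] (Fin m → ℂ))
    {M : ℝ} (hM : 0 ≤ M)
    (h₁ : ∀ y u, ‖wpair τ (T y) u‖ ≤ wnorm d 1 y * wnorm τ 1 u)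
    (h₂ : ∀ y u, ‖wpair τ (T y) u‖ ≤ M * wnorm d 2 y * wnorm τ 2 u)
    {p q : ℝ} (hpq : p.HolderConjugate q) (hp : 2 ≤ p) (x : Fin n → ℂ) (u : Fin m → ℂ) :
    ‖wpair τ (T x) u‖ ≤ M ^ (2 / p) * wnorm d q x * wnorm τ q u := by
  have hq0 : 0 < q := hpq.symm.pos
  have hqp : q * (1 - p⁻¹) = 1 := by rw [hpq.one_sub_inv, mul_inv_cancel₀ hq0.ne']
  have hq2 : q ≤ 2 := by nlinarith [inv_anti₀ two_pos hp]
  set X : ℂ → Fin n → ℂ := fun z i => phasePow (x i) z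
  set U : ℂ → Fin m → ℂ := fun z j => phasePow (u j) z
  set f : ℂ → ℂ := fun z => wpair τ (T (X z)) (U z)
  set N := wnorm d q x
  set K := wnorm τ q u
  have hN : 0 ≤ N := wnorm_nonneg hd x
  have hK : 0 ≤ K := wnorm_nonneg hτ u
  have hf : Differentiable ℂ f :=
    Differentiable.wpair
      ((LinearMap.toContinuousLinearMap T).differentiable.comp
        (differentiable_pi.2 fun i => differentiable_phasePow (x i)))
      (differentiable_pi.2 fun j => differentiable_phasePow (u j))
  have hbdd : BddAbove ((norm ∘ f) '' verticalClosedStrip (q / 2) q) := by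
    refine ⟨(∑ i, d i * max 1 ‖x i‖ ^ q) * ∑ j, τ j * max 1 ‖u j‖ ^ q, ?_⟩
    rintro _ ⟨z, ⟨hz₀, hz₁⟩, rfl⟩
    have hz : 0 < z.re := by linarith
    refine (h₁ _ _).trans ?_
    rw [wnorm_one, wnorm_one]
    refine mul_le_mul
      (Finset.sum_le_sum fun i _ => mul_le_mul_of_nonneg_left (norm_phasePow_le _ hz hz₁) (hd i))
      (Finset.sum_le_sum fun j _ => mul_le_mul_of_nonneg_left (norm_phasePow_le _ hz hz₁) (hτ j))
      (Finset.sum_nonneg fun j _ => mul_nonneg (hτ j) (norm_nonneg _))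
      (Finset.sum_nonneg fun i _ => mul_nonneg (hd i) (by positivity))
  have hlow : ∀ z ∈ Complex.re ⁻¹' {q / 2}, ‖f z‖ ≤ M * (N * K) ^ (q / 2) := by
    rintro z (hz : z.re = q / 2)
    have hz0 : 0 < z.re := by rw [hz]; positivity
    have hzr : z.re * 2 = q := by rw [hz]; ring
    calc ‖f z‖ ≤ M * wnorm d 2 (X z) * wnorm τ 2 (U z) := h₂ _ _
      _ = M * (N * K) ^ (q / 2) := by
        rw [wnorm_phasePow hd x hz0 two_pos hzr, wnorm_phasePow hτ u hz0 two_pos hzr,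
          Real.mul_rpow hN hK, mul_assoc]
  have hhigh : ∀ z ∈ Complex.re ⁻¹' {q}, ‖f z‖ ≤ (N * K) ^ q := by
    rintro z (hz : z.re = q)
    have hz0 : 0 < z.re := hz ▸ hq0
    have hzr : z.re * 1 = q := by rw [hz, mul_one]
    calc ‖f z‖ ≤ wnorm d 1 (X z) * wnorm τ 1 (U z) := h₁ _ _
      _ = (N * K) ^ q := by
        rw [wnorm_phasePow hd x hz0 one_pos hzr, wnorm_phasePow hτ u hz0 one_pos hzr, div_one,
          Real.mul_rpow hN hK]
  have hmem : (1 : ℂ) ∈ verticalClosedStrip (q / 2) q :=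
    ⟨by simp; linarith, by simp; linarith [hpq.symm.lt]⟩
  have hthree := norm_le_interp_of_mem_verticalClosedStrip' (by linarith) hmem hf.diffContOnCl
    hbdd hlow hhigh
  have hθ : (1 - q / 2) / (q - q / 2) = 1 - 2 / p := by
    rw [div_eq_iff (by linarith)]
    linear_combination -hqp
  have hf1 : f 1 = wpair τ (T x) u := by simp only [f, X, U, phasePow_one]
  rw [hf1, Complex.one_re, hθ, sub_sub_cancel, interpolation_rpow_eq hpq hM (mul_nonneg hN hK)]
    at hthree
  rwa [mul_assoc]

namespace IsAdjointPair

variable {n m : ℕ} {d : Fin n → ℝ} {τ : Fin m → ℝ} {F : (Fin n → ℂ) →ₗ[ℂ] (Fin m → ℂ)}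
  {G : (Fin m → ℂ) →ₗ[ℂ] (Fin n → ℂ)}

lemma wpair_star_map (h : IsAdjointPair d τ F G) (x : Fin n → ℂ) (u : Fin m → ℂ) :
    wpair τ (star (F x)) u = wpair d (star x) (G u) :=
  h x u

lemma norm_wpair_adjoint_le (h : IsAdjointPair d τ F G) {C r s : ℝ}
    (hF : ∀ y u, ‖wpair τ (F y) u‖ ≤ C * wnorm d r y * wnorm τ s u)
    (v : Fin m → ℂ) (y : Fin n → ℂ) :
    ‖wpair d (G v) y‖ ≤ C * wnorm τ s v * wnorm d r y := by
  have key : wpair d (G v) y = star (wpair τ (F (star y)) (star v)) := by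
    rw [star_wpair, star_star, h.wpair_star_map, star_star, wpair_comm]
  rw [key, norm_star, mul_right_comm]
  simpa only [wnorm_star] using hF (star y) (star v)

lemma wnorm_two_map (h : IsAdjointPair d τ F G) (hd : ∀ i, 0 ≤ d i) {k : ℝ} (hk : 0 ≤ k)
    (hGF : ∀ y, G (F y) = (k : ℂ) • y) (y : Fin n → ℂ) :
    wnorm τ 2 (F y) = k ^ (1 / 2 : ℝ) * wnorm d 2 y := by
  have parseval : ∑ j, τ j * ‖F y j‖ ^ (2 : ℝ) = k * ∑ i, d i * ‖y i‖ ^ (2 : ℝ) := by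
    have := h.wpair_star_map y (F y)
    rw [hGF, wpair_smul_right, wpair_star_self, wpair_star_self] at this
    exact_mod_cast this
  rw [wnorm, wnorm, parseval, Real.mul_rpow hk (sum_mul_norm_rpow_nonneg hd 2 y)]

lemma norm_wpair_map_le (h : IsAdjointPair d τ F G) (hd : ∀ i, 0 ≤ d i) (hτ : ∀ j, 0 ≤ τ j)
    {k : ℝ} (hk : 0 ≤ k) (hF1 : ∀ y, inorm (F y) ≤ wnorm d 1 y)
    (hGF : ∀ y, G (F y) = (k : ℂ) • y) {p q : ℝ} (hpq : p.HolderConjugate q) (hp : 2 ≤ p)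
    (y : Fin n → ℂ) (u : Fin m → ℂ) :
    ‖wpair τ (F y) u‖ ≤ k ^ (1 / p) * wnorm d q y * wnorm τ q u := by
  have hM : (k ^ (1 / 2 : ℝ)) ^ (2 / p) = k ^ (1 / p) := by
    rw [← Real.rpow_mul hk]; ring_nf
  refine hM ▸ norm_wpair_le_rieszThorin hd hτ F (by positivity) (fun y u => ?_) (fun y u => ?_)
    hpq hp y u
  · exact (norm_wpair_le_inorm_mul_wnorm_one hτ _ u).trans
      (mul_le_mul_of_nonneg_right (hF1 y) (wnorm_nonneg hτ u))
  · rw [← h.wnorm_two_map hd hk hGF]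
    exact norm_wpair_le_wnorm_mul_wnorm hτ .two_two _ _

end IsAdjointPair

theorem quantum_WW_general_exponents_general {n m : ℕ}
    (d : Fin n → ℝ) (τ : Fin m → ℝ) (hd : ∀ i, 0 < d i) (hτ : ∀ j, 0 < τ j)
    (k : ℝ) (hk : 0 < k)
    (F : (Fin n → ℂ) →ₗ[ℂ] (Fin m → ℂ)) (G : (Fin m → ℂ) →ₗ[ℂ] (Fin n → ℂ))
    (hadj : IsAdjointPair d τ F G)
    (hF1 : ∀ x, inorm (F x) ≤ wnorm d 1 x)
    (hiso : ∀ y, G (F y) = (k : ℂ) • y)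
    (p q : ℝ) (hp : 2 ≤ p) (hpq : 1 / p + 1 / q = 1)
    (x : Fin n → ℂ) :
    wnorm d q x * wnorm τ q (F x) ≥ k ^ (1 - 2 / p) * (wnorm d p x * wnorm τ p (F x)) := by
  have hd : ∀ i, 0 ≤ d i := fun i => (hd i).le
  have hτ : ∀ j, 0 ≤ τ j := fun j => (hτ j).le
  have hpq : p.HolderConjugate q :=
    Real.holderConjugate_iff.2 ⟨by linarith, by simpa only [one_div] using hpq⟩
  have hC : 0 ≤ k ^ (1 / p) := by positivity
  have hF := hadj.norm_wpair_map_le hd hτ hk.le hF1 hiso hpq hp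
  have hausdorffYoung_F : wnorm τ p (F x) ≤ k ^ (1 / p) * wnorm d q x :=
    wnorm_le_of_norm_wpair_le hτ hpq (mul_nonneg hC (wnorm_nonneg hd x)) (hF x)
  have hausdorffYoung_G : k * wnorm d p x ≤ k ^ (1 / p) * wnorm τ q (F x) := by
    rw [← wnorm_smul_ofReal hd hpq.ne_zero hk.le, ← hiso]
    exact wnorm_le_of_norm_wpair_le hd hpq (mul_nonneg hC (wnorm_nonneg hτ _))
      (hadj.norm_wpair_adjoint_le hF (F x))
  have hprod := mul_le_mul hausdorffYoung_F hausdorffYoung_G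
    (mul_nonneg hk.le (wnorm_nonneg hd x)) (mul_nonneg hC (wnorm_nonneg hd x))
  have hk2 : k ^ (1 - 2 / p) * (k ^ (1 / p) * k ^ (1 / p)) = k := by
    rw [← Real.rpow_add hk, ← Real.rpow_add hk]; ring_nf; exact Real.rpow_one k
  rw [ge_iff_le, ← mul_le_mul_iff_of_pos_left (by positivity : 0 < k ^ (1 / p) * k ^ (1 / p))]
  linear_combination hprod + wnorm d p x * wnorm τ p (F x) * hk2

/-- Quantum Wigderson-Wigderson uncertainty principle for general conjugate
exponents, commutative finite-dimensional case. -/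
theorem quantum_WW_general_exponents {n m : ℕ} (hn : 0 < n) (hm : 0 < m)
    (d : Fin n → ℝ) (τ : Fin m → ℝ) (hd : ∀ i, 0 < d i) (hτ : ∀ j, 0 < τ j)
    (k : ℝ) (hk : 0 < k)
    (F : (Fin n → ℂ) →ₗ[ℂ] (Fin m → ℂ)) (G : (Fin m → ℂ) →ₗ[ℂ] (Fin n → ℂ))
    (hadj : IsAdjointPair d τ F G)
    (hF1 : ∀ x, inorm (F x) ≤ wnorm d 1 x)
    (hFk : ∀ x, k * inorm x ≤ inorm (G (F x)))
    (hiso : ∀ y, G (F y) = (k : ℂ) • y)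
    (p q : ℝ) (hp : 2 ≤ p) (hpq : 1 / p + 1 / q = 1)
    (x : Fin n → ℂ) :
    wnorm d q x * wnorm τ q (F x) ≥ k ^ (1 - 2 / p) * (wnorm d p x * wnorm τ p (F x)) :=
  quantum_WW_general_exponents_general d τ hd hτ k hk F G hadj hF1 hiso p q hp hpq x
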